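/- arXiv:2304.09853 — 2 statements merged into one kernel-verified Lean document; each statement's English description precedes it below -/
import Mathlib

section
/- Applying T − 1 steps of Q-value iteration to the Q-function of any policy in a deterministic finite-horizon MDP yields the optimal Q-function; hence every deterministic MDP is T-QVI-solvable. -/
open Finset Classical

/-- Total reward of playing a list of actions from state `s` in a deterministic MDP. -/
def seqReturn {S : Type*} (A : ℕ) (f : S → Fin A → S) (R : S → Fin A → ℝ) :
    S → List (Fin A) → ℝ
  | _, [] => 0
  | s, a :: rest => R s a + seqReturn A f R (f s a) rest

/-- Value function of a (time-indexed, stochastic) policy by fuel recursion. -/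
noncomputable def polV {S : Type*} (A : ℕ) (f : S → Fin A → S) (R : S → Fin A → ℝ)
    (pi : ℕ → S → Fin A → ℝ) : ℕ → ℕ → S → ℝ
  | _, 0, _ => 0
  | t, n + 1, s => ∑ a : Fin A, pi t s a * (R s a + polV A f R pi (t + 1) n (f s a))

/-- `Q^π_t(s,a)` in a horizon-`T` deterministic MDP. -/
noncomputable def polQ {S : Type*} (A T : ℕ) (f : S → Fin A → S) (R : S → Fin A → ℝ)
    (pi : ℕ → S → Fin A → ℝ) (t : ℕ) (s : S) (a : Fin A) : ℝ :=
  R s a + polV A f R pi (t + 1) (T - t) (f s a)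

/-- Optimal value function by fuel recursion. -/
noncomputable def optV {S : Type*} (A : ℕ) (f : S → Fin A → S) (R : S → Fin A → ℝ) :
    ℕ → S → ℝ
  | 0, _ => 0
  | n + 1, s => ⨆ a : Fin A, (R s a + optV A f R n (f s a))

/-- Optimal Q-function at timestep `t` (horizon `T`). -/
noncomputable def optQ {S : Type*} (A T : ℕ) (f : S → Fin A → S) (R : S → Fin A → ℝ)
    (t : ℕ) (s : S) (a : Fin A) : ℝ :=
  R s a + optV A f R (T - t) (f s a)

/-- Q-value-iteration iterates: `qIter ... Q1 0 = Q1`, `qIter ... Q1 (j+1) = QVI (qIter ... Q1 j)`. -/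
noncomputable def qIter {S : Type*} (A T : ℕ) (f : S → Fin A → S) (R : S → Fin A → ℝ)
    (Q1 : ℕ → S → Fin A → ℝ) : ℕ → ℕ → S → Fin A → ℝ
  | 0 => Q1
  | j + 1 => fun t s a =>
      R s a + if t < T then ⨆ a' : Fin A, qIter A T f R Q1 j (t + 1) (f s a) a' else 0

/-- Trajectory of a deterministic policy: `polState ... t` is the state at timestep `t+1`. -/
def polState {S : Type*} (A : ℕ) (f : S → Fin A → S) (p : ℕ → S → Fin A) (s1 : S) : ℕ → S
  | 0 => s1
  | t + 1 => f (polState A f p s1 t) (p (t + 1) (polState A f p s1 t))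

/-!
Q-value iteration is exact from the last timestep backwards: at `t = T` any Q-function of a
policy already equals `R = Q*_T`, and one QVI step turns a Q-function that is optimal at
timestep `t + 1` into one that is optimal at timestep `t`, because the optimal Q-function
satisfies the same Bellman recursion `Q*_t(s,a) = R(s,a) + max_{a'} Q*_{t+1}(f(s,a), a')`.
After `T - 1` steps the iterate is `Q*` at every timestep `t ≥ 1`, and a policy greedy
with respect to `Q*` attains the maximum at every step of its trajectory, so its return is
`V*_1`.
-/

section

variable {S : Type*} {A T : ℕ} {f : S → Fin A → S} {R : S → Fin A → ℝ}

theorem optQ_self (s : S) (a : Fin A) : optQ A T f R T s a = R s a := by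
  simp [optQ, optV]

theorem polQ_self (pi : ℕ → S → Fin A → ℝ) (s : S) (a : Fin A) :
    polQ A T f R pi T s a = R s a := by
  simp [polQ, polV]

theorem optQ_eq_add_iSup_optQ {t : ℕ} (ht : t < T) (s : S) (a : Fin A) :
    optQ A T f R t s a = R s a + ⨆ a', optQ A T f R (t + 1) (f s a) a' := by
  rw [optQ, show T - t = T - (t + 1) + 1 by omega]
  rfl

theorem qIter_succ_self (Q : ℕ → S → Fin A → ℝ) (i : ℕ) (s : S) (a : Fin A) :
    qIter A T f R Q (i + 1) T s a = R s a := by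
  simp [qIter]

theorem qIter_succ_of_lt (Q : ℕ → S → Fin A → ℝ) (i : ℕ) {t : ℕ} (ht : t < T)
    (s : S) (a : Fin A) :
    qIter A T f R Q (i + 1) t s a = R s a + ⨆ a', qIter A T f R Q i (t + 1) (f s a) a' := by
  simp [qIter, ht]

theorem qIter_eq_optQ {Q : ℕ → S → Fin A → ℝ} (hQ : ∀ s a, Q T s a = R s a) :
    ∀ i t, t ≤ T → T - i ≤ t → ∀ s a, qIter A T f R Q i t s a = optQ A T f R t s a := by
  intro i
  induction i with
  | zero =>
    intro t htT hTt s a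
    obtain rfl : t = T := by omega
    rw [optQ_self, ← hQ]
    rfl
  | succ i ih =>
    intro t htT hTt s a
    rcases htT.lt_or_eq with ht | rfl
    · rw [qIter_succ_of_lt Q i ht, optQ_eq_add_iSup_optQ ht]
      simp only [ih (t + 1) ht (by omega)]
    · rw [qIter_succ_self, optQ_self]

theorem optV_succ_eq_of_forall_le {n : ℕ} {s : S} {b : Fin A}
    (hb : ∀ a, R s a + optV A f R n (f s a) ≤ R s b + optV A f R n (f s b)) :
    optV A f R (n + 1) s = R s b + optV A f R n (f s b) := by
  have : Nonempty (Fin A) := ⟨b⟩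
  exact le_antisymm (ciSup_le hb)
    (le_ciSup (f := fun a => R s a + optV A f R n (f s a)) (Set.finite_range _).bddAbove b)

theorem polState_succ (p : ℕ → S → Fin A) (s1 : S) (i : ℕ) :
    polState A f p s1 (i + 1) = polState A f (fun t => p (t + 1)) (f s1 (p 1 s1)) i := by
  induction i with
  | zero => rfl
  | succ i ih => rw [polState, ih]; rfl

theorem seqReturn_eq_optV_of_greedy (m : ℕ) (p : ℕ → S → Fin A) (s1 : S)
    (hp : ∀ t, 1 ≤ t → t ≤ m → ∀ s a, optQ A m f R t s a ≤ optQ A m f R t s (p t s)) :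
    seqReturn A f R s1 (List.ofFn fun i : Fin m => p (i + 1) (polState A f p s1 i))
      = optV A f R m s1 := by
  induction m generalizing p s1 with
  | zero => rfl
  | succ m ih =>
    have hfirst : ∀ a, R s1 a + optV A f R m (f s1 a)
        ≤ R s1 (p 1 s1) + optV A f R m (f s1 (p 1 s1)) := by
      simpa [optQ] using hp 1 le_rfl (by omega) s1
    have htail : ∀ t, 1 ≤ t → t ≤ m → ∀ s a,
        optQ A m f R t s a ≤ optQ A m f R t s (p (t + 1) s) := by
      intro t ht1 htm s a
      simpa [optQ] using hp (t + 1) (by omega) (by omega) s a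
    rw [optV_succ_eq_of_forall_le hfirst, ← ih (fun t => p (t + 1)) _ htail,
      List.ofFn_succ]
    simp only [Fin.val_zero, Fin.val_succ, polState_succ]
    rfl

end

theorem qvi_T_steps_optimal_general
    {S : Type*} (A T : ℕ)
    (f : S → Fin A → S) (R : S → Fin A → ℝ)
    (pi : ℕ → S → Fin A → ℝ) :
    -- (a) after i steps of QVI the Q-function is optimal on timesteps t ≥ T − i
    (∀ i t s a, 1 ≤ t → t ≤ T → T - i ≤ t →
        qIter A T f R (polQ A T f R pi) i t s a = optQ A T f R t s a) ∧
    -- (b) hence any policy greedy w.r.t. the (T−1)-fold iterate is optimal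
    (∀ (s1 : S) (p : ℕ → S → Fin A),
      (∀ t s a, 1 ≤ t → t ≤ T →
          qIter A T f R (polQ A T f R pi) (T - 1) t s a
            ≤ qIter A T f R (polQ A T f R pi) (T - 1) t s (p t s)) →
      seqReturn A f R s1
          (List.ofFn (fun i : Fin T => p (i + 1) (polState A f p s1 i)))
        = optV A f R T s1) := by
  have hexact := qIter_eq_optQ (f := f) (Q := polQ A T f R pi) (polQ_self pi)
  refine ⟨fun i t s a _ htT hTt => hexact i t htT hTt s a, fun s1 p hgreedy => ?_⟩
  refine seqReturn_eq_optV_of_greedy T p s1 fun t ht1 htT s a => ?_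
  rw [← hexact (T - 1) t htT (by omega), ← hexact (T - 1) t htT (by omega)]
  exact hgreedy t s a ht1 htT

/--
Applying `T − 1` steps of Q-value iteration to the Q-function of any
policy `pi` in a deterministic finite-horizon MDP yields the optimal Q-function.
More precisely, writing `Q^{(i)}` for `i` applications of QVI to `Q^pi`, one has
`Q^{(i)}_t = Q*_t` for all timesteps `t ∈ [1,T]` with `T − i ≤ t`; in particular
`Q^{(T−1)}_t = Q*_t` for every `t ∈ [1,T]`, so every policy greedy with respect to
`Q^{(T−1)}` is optimal: every deterministic MDP is `T`-QVI-solvable.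
-/
theorem qvi_T_steps_optimal
    {S : Type*} (A T : ℕ) (hApos : 0 < A)
    (f : S → Fin A → S) (R : S → Fin A → ℝ)
    (pi : ℕ → S → Fin A → ℝ)
    (hprob : ∀ t s, ∑ a : Fin A, pi t s a = 1)
    (hnn : ∀ t s a, 0 ≤ pi t s a) :
    -- (a) after i steps of QVI the Q-function is optimal on timesteps t ≥ T − i
    (∀ i t s a, 1 ≤ t → t ≤ T → T - i ≤ t →
        qIter A T f R (polQ A T f R pi) i t s a = optQ A T f R t s a) ∧
    -- (b) hence any policy greedy w.r.t. the (T−1)-fold iterate is optimal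
    (∀ (s1 : S) (p : ℕ → S → Fin A),
      (∀ t s a, 1 ≤ t → t ≤ T →
          qIter A T f R (polQ A T f R pi) (T - 1) t s a
            ≤ qIter A T f R (polQ A T f R pi) (T - 1) t s (p t s)) →
      seqReturn A f R s1
          (List.ofFn (fun i : Fin T => p (i + 1) (polState A f p s1 i)))
        = optV A f R T s1) :=
  qvi_T_steps_optimal_general A T f R pi
end

section
/- GORP per-iteration failure bound: consider one iteration of GORP at state s_i (with s_i visited by some optimal policy), lookahead k, and n rollouts per action sequence, in a deterministic MDP with nonnegative rewards. If n ≥ 6·log(2TA^k)·max_a Q^k_i(s_i, a)·V*_i(s_i)/Δ^k_i(s_i)², then the probability that some action a_i with a_i ∉ argmax_a Q^k_i(s_i, a) achieves the maximal estimated k-step Q-value is at most 1/(2T). -/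
open Finset Classical

/-- State reached after playing a list of actions from `s`. -/
def stateAfter {S : Type*} (A : ℕ) (f : S → Fin A → S) : S → List (Fin A) → S
  | s, [] => s
  | s, a :: rest => stateAfter A f (f s a) rest

/-!
Write `m seq` for the mean return of playing the action sequence `seq` and then uniformly random
actions, so that `Q^k_i(s_i, a)` is the largest `m seq` over the sequences starting with `a`, and
the rollouts of `seq` are i.i.d. with mean `m seq` and values in `[0, V*]`. Fix a sequence `best`
attaining the maximum `M`. A sequence with a suboptimal first action has `m seq ≤ M - Δ`, and its
empirical mean is at least that of `best` with probability at most `exp (-n Δ² / (6 M V*))`: this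
is Chernoff's bound, with the moment generating function of a `[0, V]`-valued variable of mean `m`
bounded by `exp (m / V * (exp (c V) - 1))` (convexity of `exp`) and `c V = log (1 + Δ / (2 M))`.
A union bound over the at most `A^k` such sequences gives `1 / (2T)`.
-/

lemma exp_mul_le_chord {c V x : ℝ} (hV : 0 < V) (hx0 : 0 ≤ x) (hxV : x ≤ V) :
    Real.exp (c * x) ≤ 1 + x / V * (Real.exp (c * V) - 1) := by
  have hθ0 : 0 ≤ x / V := div_nonneg hx0 hV.le
  have hθ1 : x / V ≤ 1 := (div_le_one hV).mpr hxV
  have hconv := convexOn_exp.2 (Set.mem_univ 0) (Set.mem_univ (c * V)) (sub_nonneg.mpr hθ1) hθ0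
    (sub_add_cancel 1 (x / V))
  have hx : (1 - x / V) • (0 : ℝ) + (x / V) • (c * V) = c * x := by
    simp only [smul_eq_mul, mul_zero, zero_add]
    field_simp
  rw [hx, Real.exp_zero, smul_eq_mul, smul_eq_mul] at hconv
  linarith

lemma sum_exp_mul_le {β : Type*} [Fintype β] (X : β → ℝ) {V m : ℝ} (c : ℝ) (hV : 0 < V)
    (hX0 : ∀ b, 0 ≤ X b) (hXV : ∀ b, X b ≤ V) (hm : ∑ b, X b = Fintype.card β * m) :
    ∑ b, Real.exp (c * X b) ≤ Fintype.card β * Real.exp (m / V * (Real.exp (c * V) - 1)) := by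
  calc ∑ b, Real.exp (c * X b)
      ≤ ∑ b, (1 + X b / V * (Real.exp (c * V) - 1)) :=
        Finset.sum_le_sum fun b _ => exp_mul_le_chord hV (hX0 b) (hXV b)
    _ = Fintype.card β * (1 + m / V * (Real.exp (c * V) - 1)) := by
        rw [Finset.sum_add_distrib, ← Finset.sum_mul, ← Finset.sum_div, hm]
        simp only [Finset.sum_const, Finset.card_univ, nsmul_eq_mul, mul_one]
        ring
    _ ≤ Fintype.card β * Real.exp (m / V * (Real.exp (c * V) - 1)) := by
        gcongr
        linarith [Real.add_one_le_exp (m / V * (Real.exp (c * V) - 1))]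

/-- Chernoff's bound for the uniform distribution on `ι → β`, under which the coordinates are
independent. -/
lemma card_filter_sum_nonneg_le_prod_sum_exp {ι β : Type*} [Fintype ι] [DecidableEq ι]
    [Fintype β] (Y : ι → β → ℝ) :
    (#{ω : ι → β | 0 ≤ ∑ c, Y c (ω c)} : ℝ) ≤ ∏ c, ∑ b, Real.exp (Y c b) := by
  calc (#{ω : ι → β | 0 ≤ ∑ c, Y c (ω c)} : ℝ)
      = ∑ ω ∈ {ω : ι → β | 0 ≤ ∑ c, Y c (ω c)}, 1 := by simp
    _ ≤ ∑ ω ∈ {ω : ι → β | 0 ≤ ∑ c, Y c (ω c)}, Real.exp (∑ c, Y c (ω c)) :=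
        Finset.sum_le_sum fun ω hω => Real.one_le_exp (Finset.mem_filter.mp hω).2
    _ ≤ ∑ ω : ι → β, Real.exp (∑ c, Y c (ω c)) :=
        Finset.sum_le_sum_of_subset_of_nonneg (Finset.filter_subset _ _)
          fun _ _ _ => (Real.exp_pos _).le
    _ = ∏ c, ∑ b, Real.exp (Y c b) := by
        simp only [Real.exp_sum, Fintype.prod_sum]

lemma mean_mem_Icc {β : Type*} [Fintype β] [Nonempty β] {X : β → ℝ} {V m : ℝ}
    (hX0 : ∀ b, 0 ≤ X b) (hXV : ∀ b, X b ≤ V) (hm : ∑ b, X b = Fintype.card β * m) :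
    m ∈ Set.Icc 0 V := by
  have hβ : (0 : ℝ) < Fintype.card β := by exact_mod_cast Fintype.card_pos
  have h0 : 0 ≤ ∑ b, X b := Finset.sum_nonneg fun b _ => hX0 b
  have hV : ∑ b, X b ≤ ∑ _b : β, V := Finset.sum_le_sum fun b _ => hXV b
  rw [hm] at h0 hV
  simp only [Finset.sum_const, Finset.card_univ, nsmul_eq_mul] at hV
  exact ⟨nonneg_of_mul_nonneg_right h0 hβ, le_of_mul_le_mul_left hV hβ⟩

lemma bernstein_exponent_le {m M Δ V L : ℝ} {n : ℕ} (hΔ : 0 < Δ) (hM : 0 < M) (hV : 0 < V)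
    (hm : m ≤ M - Δ) (hn : 6 * L * (M * V / Δ ^ 2) ≤ n) :
    n * ((m * (Δ / (2 * M)) + M * ((1 + Δ / (2 * M))⁻¹ - 1)) / V) ≤ -L := by
  have hexponent : m * (Δ / (2 * M)) + M * ((1 + Δ / (2 * M))⁻¹ - 1) ≤ -(Δ ^ 2 / (6 * M)) := by
    rw [← sub_nonneg]
    have : -(Δ ^ 2 / (6 * M)) - (m * (Δ / (2 * M)) + M * ((1 + Δ / (2 * M))⁻¹ - 1))
        = Δ / (2 * M) * ((M - Δ - m) + Δ * (1 + 4 * (Δ / (2 * M))) / (6 * (1 + Δ / (2 * M)))) := by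
      field_simp
      ring
    rw [this]
    have : 0 ≤ M - Δ - m := by linarith
    positivity
  calc n * ((m * (Δ / (2 * M)) + M * ((1 + Δ / (2 * M))⁻¹ - 1)) / V)
      ≤ n * (-(Δ ^ 2 / (6 * M)) / V) := by gcongr
    _ ≤ -L := by
      rw [← sub_nonneg]
      have : -L - n * (-(Δ ^ 2 / (6 * M)) / V)
          = (n - 6 * L * (M * V / Δ ^ 2)) * (Δ ^ 2 / (6 * M * V)) := by
        field_simp
        ring
      rw [this]
      exact mul_nonneg (sub_nonneg.mpr hn) (by positivity)

noncomputable def sampleMean {P β : Type*} {n : ℕ} (X : P → β → ℝ) (ω : P × Fin n → β) (p : P) :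
    ℝ :=
  (∑ j, X p (ω (p, j))) / n

section SampleSums

variable {P β : Type*} [Fintype P] [DecidableEq P] [Fintype β] {n : ℕ}

lemma card_filter_weighted_sum_nonneg_le (X : P → β → ℝ) {V : ℝ} (m w : P → ℝ) (hV : 0 < V)
    (hX0 : ∀ p b, 0 ≤ X p b) (hXV : ∀ p b, X p b ≤ V)
    (hm : ∀ p, ∑ b, X p b = Fintype.card β * m p) :
    (#{ω : P × Fin n → β | 0 ≤ ∑ p, w p * ∑ j, X p (ω (p, j))} : ℝ)
      ≤ Fintype.card (P × Fin n → β) *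
          Real.exp (n * ∑ p, m p / V * (Real.exp (w p * V) - 1)) := by
  have hsum : ∀ ω : P × Fin n → β,
      ∑ c, w c.1 * X c.1 (ω c) = ∑ p, w p * ∑ j, X p (ω (p, j)) := fun ω => by
    simp only [Fintype.sum_prod_type, Finset.mul_sum]
  calc (#{ω : P × Fin n → β | 0 ≤ ∑ p, w p * ∑ j, X p (ω (p, j))} : ℝ)
      ≤ ∏ c : P × Fin n, ∑ b, Real.exp (w c.1 * X c.1 b) := by
        have h := card_filter_sum_nonneg_le_prod_sum_exp fun (c : P × Fin n) (b : β) =>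
          w c.1 * X c.1 b
        simp only [hsum] at h
        exact h
    _ ≤ ∏ c : P × Fin n, Fintype.card β * Real.exp (m c.1 / V * (Real.exp (w c.1 * V) - 1)) :=
        Finset.prod_le_prod (fun _ _ => Finset.sum_nonneg fun _ _ => (Real.exp_pos _).le)
          fun c _ => sum_exp_mul_le (X c.1) (w c.1) hV (hX0 c.1) (hXV c.1) (hm c.1)
    _ = Fintype.card (P × Fin n → β) *
          Real.exp (n * ∑ p, m p / V * (Real.exp (w p * V) - 1)) := by
        rw [Finset.prod_mul_distrib, ← Real.exp_sum, Fintype.sum_prod_type, Finset.mul_sum]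
        simp only [Finset.prod_const, Finset.card_univ, Finset.sum_const, nsmul_eq_mul,
          Fintype.card_fun, Fintype.card_prod, Fintype.card_fin, Nat.cast_pow]

lemma card_sampleMean_le_sampleMean_le [Nonempty β] (X : P → β → ℝ) {V Δ L : ℝ} (m : P → ℝ)
    {p q : P} (hX0 : ∀ p b, 0 ≤ X p b) (hXV : ∀ p b, X p b ≤ V)
    (hm : ∀ p, ∑ b, X p b = Fintype.card β * m p) (hΔ : 0 < Δ) (hpq : m p ≤ m q - Δ)
    (hL : 0 < L) (hn : 6 * L * (m q * V / Δ ^ 2) ≤ n) :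
    (#{ω : P × Fin n → β | sampleMean X ω q ≤ sampleMean X ω p} : ℝ)
      ≤ Fintype.card (P × Fin n → β) * Real.exp (-L) := by
  obtain ⟨hmp, -⟩ := mean_mem_Icc (hX0 p) (hXV p) (hm p)
  obtain ⟨-, hmqV⟩ := mean_mem_Icc (hX0 q) (hXV q) (hm q)
  have hM : 0 < m q := by linarith
  have hV : 0 < V := hM.trans_le hmqV
  have hne : p ≠ q := by rintro rfl; linarith
  have hn0 : (0 : ℝ) < n := hn.trans_lt' (by positivity)
  -- Chernoff's bound for the difference of the two sample sums, at `λ = u / V`.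
  set c := Δ / (2 * m q)
  have h1c : 0 < 1 + c := by positivity
  set u := Real.log (1 + c)
  have hu : 0 ≤ u := Real.log_nonneg (by linarith [show 0 < c by positivity])
  have hexpu : Real.exp u = 1 + c := Real.exp_log h1c
  let w : P → ℝ := fun r => if r = p then u / V else if r = q then -(u / V) else 0
  have hevent : ∀ ω ∈ (Finset.univ : Finset (P × Fin n → β)),
      sampleMean X ω q ≤ sampleMean X ω p → 0 ≤ ∑ r, w r * ∑ j, X r (ω (r, j)) := by
    intro ω _ hω
    rw [sampleMean, sampleMean, div_le_div_iff_of_pos_right hn0] at hω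
    rw [Fintype.sum_eq_add p q hne fun r hr => by simp [w, hr.1, hr.2]]
    simp only [w, if_pos, if_neg hne.symm]
    nlinarith [div_nonneg hu hV.le]
  have hexponent : ∑ r, m r / V * (Real.exp (w r * V) - 1)
      = (m p * c + m q * ((1 + c)⁻¹ - 1)) / V := by
    rw [Fintype.sum_eq_add p q hne fun r hr => by simp [w, hr.1, hr.2]]
    simp only [w, if_pos, if_neg hne.symm, neg_mul, div_mul_cancel₀ u hV.ne', Real.exp_neg,
      hexpu]
    ring
  calc (#{ω : P × Fin n → β | sampleMean X ω q ≤ sampleMean X ω p} : ℝ)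
      ≤ #{ω : P × Fin n → β | 0 ≤ ∑ r, w r * ∑ j, X r (ω (r, j))} := by
        exact_mod_cast Finset.card_le_card (Finset.monotone_filter_right _ hevent)
    _ ≤ Fintype.card (P × Fin n → β) * Real.exp (-L) := by
        refine (card_filter_weighted_sum_nonneg_le X m w hV hX0 hXV hm).trans ?_
        rw [hexponent]
        gcongr
        exact bernstein_exponent_le hΔ hM hV hpq hn

end SampleSums

section SecondLargest

variable {α : Type*} [Finite α] (Q : α → ℝ) {a : α} {c : ℝ}

lemma le_sSup_values_lt (ha : Q a < c) : Q a ≤ sSup {x | (∃ b, Q b = x) ∧ x < c} :=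
  le_csSup ((Set.finite_range Q).subset fun _ hx => hx.1).bddAbove ⟨⟨a, rfl⟩, ha⟩

lemma sSup_values_lt_lt (ha : Q a < c) : sSup {x | (∃ b, Q b = x) ∧ x < c} < c :=
  (Set.Nonempty.csSup_mem (s := {x | (∃ b, Q b = x) ∧ x < c}) ⟨Q a, ⟨a, rfl⟩, ha⟩
    ((Set.finite_range Q).subset fun _ hx => hx.1)).2

end SecondLargest

lemma card_filter_exists_le {ι Ω : Type*} [Fintype Ω] (s : Finset ι) (E : ι → Ω → Prop)
    [∀ i, DecidablePred (E i)] {B : ℝ} (hB : ∀ i ∈ s, (#{ω | E i ω} : ℝ) ≤ B) :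
    (#{ω | ∃ i ∈ s, E i ω} : ℝ) ≤ #s * B := by
  classical
  calc (#{ω | ∃ i ∈ s, E i ω} : ℝ) = #(s.biUnion fun i => {ω | E i ω}) := by
        congr 2; ext ω; simp
    _ ≤ ∑ i ∈ s, (#{ω | E i ω} : ℝ) := by exact_mod_cast Finset.card_biUnion_le
    _ ≤ #s * B := by simpa using Finset.sum_le_sum hB

lemma card_suboptimal_first_action_le {α β : Type*} [Fintype α] [DecidableEq α] [Nonempty α]
    [Fintype β] [Nonempty β] {k n : ℕ} (X : (Fin (k + 1) → α) → β → ℝ) {V L : ℝ}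
    (m : (Fin (k + 1) → α) → ℝ) (Q : α → ℝ) (hX0 : ∀ p b, 0 ≤ X p b) (hXV : ∀ p b, X p b ≤ V)
    (hm : ∀ p, ∑ b, X p b = Fintype.card β * m p)
    (hQ : ∀ a, Q a = ⨆ g : Fin k → α, m (Fin.cons a g)) (hL : 0 < L)
    (hn : 6 * L * ((⨆ a, Q a) * V /
      ((⨆ a, Q a) - sSup {x | (∃ a, Q a = x) ∧ x < ⨆ a, Q a}) ^ 2) ≤ n) :
    (#{ω : (Fin (k + 1) → α) × Fin n → β | ∃ seq, ¬ (∀ a', Q a' ≤ Q (seq 0)) ∧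
        ∀ seq', sampleMean X ω seq' ≤ sampleMean X ω seq} : ℝ)
      ≤ Fintype.card α ^ (k + 1) *
          (Fintype.card ((Fin (k + 1) → α) × Fin n → β) * Real.exp (-L)) := by
  set M := ⨆ a, Q a
  obtain ⟨a₀, ha₀⟩ := exists_eq_ciSup_of_finite (f := Q)
  obtain ⟨g₀, hg₀⟩ := exists_eq_ciSup_of_finite (f := fun g : Fin k → α => m (Fin.cons a₀ g))
  set best : Fin (k + 1) → α := Fin.cons a₀ g₀
  have hbest : m best = M := by rw [hg₀, ← hQ, ha₀]
  have hm_le : ∀ seq, m seq ≤ Q (seq 0) := fun seq => by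
    rw [hQ]
    conv_lhs => rw [← Fin.cons_self_tail seq]
    exact le_ciSup (f := fun g => m (Fin.cons (seq 0) g)) (Finite.bddAbove_range _) _
  let bad : Finset (Fin (k + 1) → α) := {seq | Q (seq 0) < M}
  calc (#{ω : (Fin (k + 1) → α) × Fin n → β | ∃ seq, ¬ (∀ a', Q a' ≤ Q (seq 0)) ∧
        ∀ seq', sampleMean X ω seq' ≤ sampleMean X ω seq} : ℝ)
      ≤ #{ω : (Fin (k + 1) → α) × Fin n → β |
          ∃ seq ∈ bad, sampleMean X ω best ≤ sampleMean X ω seq} := by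
        refine Nat.mono_cast (Finset.card_le_card (Finset.monotone_filter_right _ ?_))
        rintro ω - ⟨seq, hseq, hmax⟩
        obtain ⟨a', ha'⟩ := not_forall.mp hseq
        exact ⟨seq, Finset.mem_filter.mpr ⟨Finset.mem_univ _, (not_le.mp ha').trans_le
          (le_ciSup (Finite.bddAbove_range Q) a')⟩, hmax best⟩
    _ ≤ #bad * (Fintype.card ((Fin (k + 1) → α) × Fin n → β) * Real.exp (-L)) := by
        refine card_filter_exists_le bad _ fun seq hseq => ?_
        have hseq : Q (seq 0) < M := (Finset.mem_filter.mp hseq).2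
        refine card_sampleMean_le_sampleMean_le X m hX0 hXV hm
          (sub_pos.mpr (sSup_values_lt_lt Q hseq)) ?_ hL (by rwa [hbest])
        rw [hbest, sub_sub_cancel]
        exact (hm_le seq).trans (le_sSup_values_lt Q hseq)
    _ ≤ Fintype.card α ^ (k + 1) *
          (Fintype.card ((Fin (k + 1) → α) × Fin n → β) * Real.exp (-L)) := by
        gcongr
        exact_mod_cast (Finset.card_le_univ bad).trans_eq (by simp)

lemma sum_fun_fin_succ {M α : Type*} [AddCommMonoid M] [Fintype α] {N : ℕ}
    (F : (Fin (N + 1) → α) → M) : ∑ b, F b = ∑ a, ∑ g : Fin N → α, F (Fin.cons a g) := by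
  rw [← (Fin.consEquiv fun _ => α).sum_comp, Fintype.sum_prod_type]
  rfl

lemma iSup_fun_fin_succ {α : Type*} [Finite α] {N : ℕ} (F : (Fin (N + 1) → α) → ℝ) :
    ⨆ b, F b = ⨆ a, ⨆ g : Fin N → α, F (Fin.cons a g) := by
  rw [← (Fin.consEquiv fun _ => α).iSup_comp, ciSup_prod (Finite.bddAbove_range _)]
  rfl

section MDP

variable {S : Type*} {A : ℕ} (f : S → Fin A → S) (R : S → Fin A → ℝ)

lemma seqReturn_nonneg (hR : ∀ s a, 0 ≤ R s a) :
    ∀ (s : S) (l : List (Fin A)), 0 ≤ seqReturn A f R s l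
  | _, [] => le_rfl
  | s, a :: l => add_nonneg (hR s a) (seqReturn_nonneg hR (f s a) l)

lemma optV_nonneg [NeZero A] (hR : ∀ s a, 0 ≤ R s a) : ∀ (h : ℕ) (s : S), 0 ≤ optV A f R h s
  | 0, _ => le_rfl
  | h + 1, s => (add_nonneg (hR s 0) (optV_nonneg hR h (f s 0))).trans
      (le_ciSup (f := fun a => R s a + optV A f R h (f s a)) (Finite.bddAbove_range _) 0)

lemma seqReturn_le_optV [NeZero A] (hR : ∀ s a, 0 ≤ R s a) :
    ∀ (s : S) (l : List (Fin A)) (h : ℕ), l.length ≤ h → seqReturn A f R s l ≤ optV A f R h s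
  | s, [], h, _ => optV_nonneg f R hR h s
  | _, _ :: _, 0, hl => absurd hl (by simp)
  | s, a :: l, h + 1, hl =>
      (add_le_add_right (seqReturn_le_optV hR (f s a) l h (by simpa using hl)) _).trans
        (le_ciSup (f := fun a => R s a + optV A f R h (f s a)) (Finite.bddAbove_range _) a)

lemma polV_stationary (π : S → Fin A → ℝ) :
    ∀ (h t t' : ℕ) (s : S), polV A f R (fun _ => π) t h s = polV A f R (fun _ => π) t' h s
  | 0, _, _, _ => rfl
  | h + 1, t, t', s => by
      simp only [polV, polV_stationary π h (t + 1) (t' + 1)]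

variable (A) in
noncomputable def randomValue (h : ℕ) (s : S) : ℝ :=
  polV A f R (fun _ _ _ => (A : ℝ)⁻¹) 0 h s

lemma randomValue_succ (h : ℕ) (s : S) :
    randomValue A f R (h + 1) s = ∑ a, (A : ℝ)⁻¹ * (R s a + randomValue A f R h (f s a)) := by
  simp only [randomValue, polV, polV_stationary f R (fun _ _ => (A : ℝ)⁻¹) h 1 0]

lemma sum_seqReturn_take_ofFn [NeZero A] :
    ∀ (N h : ℕ), h ≤ N → ∀ s : S,
      ∑ b : Fin N → Fin A, seqReturn A f R s ((List.ofFn b).take h)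
        = (A : ℝ) ^ N * randomValue A f R h s
  | _, 0, _, s => by simp [seqReturn, randomValue, polV]
  | 0, _ + 1, hh, _ => absurd hh (by simp)
  | N + 1, h + 1, hh, s => by
      have hA : (A : ℝ) ≠ 0 := NeZero.ne _
      simp only [sum_fun_fin_succ, List.ofFn_cons, List.take_succ_cons, seqReturn,
        Finset.sum_add_distrib, Finset.sum_const, Finset.card_univ, Fintype.card_fun,
        Fintype.card_fin, nsmul_eq_mul, Nat.cast_pow,
        sum_seqReturn_take_ofFn N h (by omega), randomValue_succ, Finset.mul_sum]
      rw [← Finset.sum_add_distrib]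
      refine Finset.sum_congr rfl fun a _ => ?_
      field_simp
      ring

variable (A) in
noncomputable def openLoopValue : ℕ → S → List (Fin A) → ℝ
  | 0, _, _ => 0
  | h + 1, s, [] => randomValue A f R (h + 1) s
  | h + 1, s, a :: l => R s a + openLoopValue h (f s a) l

lemma openLoopValue_nil (h : ℕ) (s : S) : openLoopValue A f R h s [] = randomValue A f R h s := by
  cases h <;> rfl

lemma sum_seqReturn_take_append [NeZero A] :
    ∀ (l : List (Fin A)) (s : S) (h N : ℕ), h ≤ l.length + N →
      ∑ b : Fin N → Fin A, seqReturn A f R s ((l ++ List.ofFn b).take h)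
        = (A : ℝ) ^ N * openLoopValue A f R h s l
  | [], s, h, N, hh => by
      simpa [openLoopValue_nil] using sum_seqReturn_take_ofFn f R N h (by simpa using hh) s
  | _ :: _, _, 0, _, _ => by simp [seqReturn, openLoopValue]
  | a :: l, s, h + 1, N, hh => by
      simp only [List.cons_append, List.take_succ_cons, seqReturn, openLoopValue,
        Finset.sum_add_distrib, Finset.sum_const, Finset.card_univ, Fintype.card_fun,
        Fintype.card_fin, nsmul_eq_mul, Nat.cast_pow,
        sum_seqReturn_take_append l (f s a) h N (by simp at hh; omega)]
      ring

lemma qIter_eq_iSup_openLoopValue [NeZero A] (T : ℕ) :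
    ∀ (j t : ℕ), t ≤ T → ∀ (s : S) (a : Fin A),
      qIter A T f R (polQ A T f R (fun _ _ _ => (A : ℝ)⁻¹)) j t s a
        = ⨆ g : Fin j → Fin A, openLoopValue A f R (T + 1 - t) s (a :: List.ofFn g)
  | 0, t, ht, s, a => by
      rw [ciSup_unique, show T + 1 - t = T - t + 1 by omega]
      simp only [qIter, polQ, openLoopValue, List.ofFn_zero, openLoopValue_nil, randomValue,
        polV_stationary f R (fun _ _ => (A : ℝ)⁻¹) _ (t + 1) 0]
  | j + 1, t, ht, s, a => by
      rw [show T + 1 - t = T - t + 1 by omega]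
      simp only [qIter, openLoopValue]
      rw [← add_ciSup (Finite.bddAbove_range _)]
      congr 1
      split_ifs with htT
      · simp only [qIter_eq_iSup_openLoopValue T j (t + 1) htT, iSup_fun_fin_succ,
          List.ofFn_cons, show T + 1 - (t + 1) = T - t by omega]
      · simp [show T - t = 0 by omega, openLoopValue]

end MDP

theorem gorp_per_iteration_failure_bound_general
    {S : Type*}
    (A T k n : ℕ) (hA : 0 < A) (hT : 1 ≤ T) (hk : 0 < k)
    (f : S → Fin A → S) (R : S → Fin A → ℝ)
    (hRnn : ∀ s a, 0 ≤ R s a)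
    (i : ℕ) (hiT : i ≤ T)
    (si : S)
    -- Q^k : the (k−1)-fold QVI iterate of the random policy's Q-function
    (Qk : ℕ → S → Fin A → ℝ)
    (hQk : Qk = qIter A T f R (polQ A T f R (fun _ _ _ => (A : ℝ)⁻¹)) (k - 1))
    (Vstar : ℕ → S → ℝ) (hV : Vstar = fun t s => optV A f R (T + 1 - t) s)
    (gap : ℕ → S → ℝ)
    (hgap : gap = fun t s => (⨆ a, Qk t s a) -
      sSup {x : ℝ | (∃ a, Qk t s a = x) ∧ x < ⨆ a, Qk t s a})
    -- enough rollouts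
    (hn : 6 * Real.log (2 * T * (A : ℝ) ^ k) *
        ((⨆ a, Qk i si a) * Vstar i si / (gap i si) ^ 2) ≤ (n : ℝ))
    -- GORP's Monte-Carlo Q-value estimates at this iteration
    (Qhat : (Fin k → Fin A) → (((Fin k → Fin A) × Fin n) → (Fin T → Fin A)) → ℝ)
    (hQhat : Qhat = fun seq ω =>
      (∑ j : Fin n,
        seqReturn A f R si
          ((List.ofFn seq ++ List.ofFn (ω (seq, j))).take (T + 1 - i))) / n) :
    2 * T * (Finset.univ.filter
        (fun ω : ((Fin k → Fin A) × Fin n) → (Fin T → Fin A) =>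
          ∃ seq : Fin k → Fin A,
            ¬ (∀ a' : Fin A, Qk i si a' ≤ Qk i si (seq ⟨0, hk⟩)) ∧
            ∀ seq' : Fin k → Fin A, Qhat seq' ω ≤ Qhat seq ω)).card
      ≤ Fintype.card (((Fin k → Fin A) × Fin n) → (Fin T → Fin A)) := by
  obtain ⟨k, rfl⟩ : ∃ k', k = k' + 1 := ⟨k - 1, by omega⟩
  have : NeZero A := ⟨hA.ne'⟩
  rw [Nat.add_sub_cancel] at hQk
  subst hQk hV hgap hQhat
  have hL : 0 < Real.log (2 * T * (A : ℝ) ^ (k + 1)) := Real.log_pos <| by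
    have : (1 : ℝ) ≤ T * (A : ℝ) ^ (k + 1) :=
      one_le_mul_of_one_le_of_one_le (mod_cast hT) (one_le_pow₀ (mod_cast hA))
    linarith
  have hbound := card_suboptimal_first_action_le (k := k) (n := n)
    (fun seq (b : Fin T → Fin A) =>
      seqReturn A f R si ((List.ofFn seq ++ List.ofFn b).take (T + 1 - i)))
    (fun seq => openLoopValue A f R (T + 1 - i) si (List.ofFn seq)) _
    (fun _ _ => seqReturn_nonneg f R hRnn _ _)
    (fun _ _ => seqReturn_le_optV f R hRnn _ _ _ (List.length_take_le _ _))
    (fun _ => by rw [sum_seqReturn_take_append f R _ _ _ _ (by simp; omega)]; simp)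
    (fun _ => by simp only [qIter_eq_iSup_openLoopValue f R T k i hiT, List.ofFn_cons])
    hL hn
  rw [Fintype.card_fin, Real.exp_neg, Real.exp_log (by positivity)] at hbound
  refine (Nat.cast_le (α := ℝ)).mp ?_
  rw [Nat.cast_mul, Nat.cast_mul, Nat.cast_ofNat]
  convert mul_le_mul_of_nonneg_left hbound (by positivity : (0 : ℝ) ≤ 2 * T) using 4
  · rfl -- two instance paths to the cast `ℕ → ℝ`
  · ext
    -- membership first: the filter's decidability instance mentions `⟨0, hk⟩`
    simp only [Finset.mem_filter, Finset.mem_univ, true_and]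
    simp only [sampleMean, Fin.zero_eta]
  · field_simp

/--
GORP per-iteration failure bound.  Consider one iteration of GORP at
timestep `i ∈ [1,T]` and state `si` (visited by some optimal action sequence), with
lookahead `k` and `n` rollouts per length-`k` action sequence, in a deterministic MDP with
nonnegative rewards.  Each estimate `Q̂(seq)` is the average over `n` uniformly random
rollouts (sequence `seq` followed by random actions until the horizon).  If
`n ≥ 6·log(2TA^k)·(max_a Q^k_i(si,a))·V*_i(si)/Δ^k_i(si)²`, then the probability (uniform
counting measure over the rollout randomness) that some maximizing sequence of `Q̂` begins
with an action not in `argmax_a Q^k_i(si, ·)` is at most `1/(2T)`.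
-/
theorem gorp_per_iteration_failure_bound
    {S : Type*} [Fintype S]
    (A T k n : ℕ) (hA : 0 < A) (hT : 1 ≤ T) (hk : 0 < k)
    (f : S → Fin A → S) (R : S → Fin A → ℝ) (s1 : S)
    (hRnn : ∀ s a, 0 ≤ R s a)
    (i : ℕ) (hi : 1 ≤ i) (hiT : i ≤ T)
    (si : S)
    -- si is visited at timestep i by some optimal action sequence
    (hsi : ∃ acts : Fin T → Fin A,
      (∀ acts' : Fin T → Fin A,
          seqReturn A f R s1 (List.ofFn acts') ≤ seqReturn A f R s1 (List.ofFn acts)) ∧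
      stateAfter A f s1 ((List.ofFn acts).take (i - 1)) = si)
    -- Q^k : the (k−1)-fold QVI iterate of the random policy's Q-function
    (Qk : ℕ → S → Fin A → ℝ)
    (hQk : Qk = qIter A T f R (polQ A T f R (fun _ _ _ => (A : ℝ)⁻¹)) (k - 1))
    (Vstar : ℕ → S → ℝ) (hV : Vstar = fun t s => optV A f R (T + 1 - t) s)
    (gap : ℕ → S → ℝ)
    (hgap : gap = fun t s => (⨆ a, Qk t s a) -
      sSup {x : ℝ | (∃ a, Qk t s a = x) ∧ x < ⨆ a, Qk t s a})
    -- enough rollouts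
    (hn : 6 * Real.log (2 * T * (A : ℝ) ^ k) *
        ((⨆ a, Qk i si a) * Vstar i si / (gap i si) ^ 2) ≤ (n : ℝ))
    -- GORP's Monte-Carlo Q-value estimates at this iteration
    (Qhat : (Fin k → Fin A) → (((Fin k → Fin A) × Fin n) → (Fin T → Fin A)) → ℝ)
    (hQhat : Qhat = fun seq ω =>
      (∑ j : Fin n,
        seqReturn A f R si
          ((List.ofFn seq ++ List.ofFn (ω (seq, j))).take (T + 1 - i))) / n) :
    2 * T * (Finset.univ.filter
        (fun ω : ((Fin k → Fin A) × Fin n) → (Fin T → Fin A) =>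
          ∃ seq : Fin k → Fin A,
            ¬ (∀ a' : Fin A, Qk i si a' ≤ Qk i si (seq ⟨0, hk⟩)) ∧
            ∀ seq' : Fin k → Fin A, Qhat seq' ω ≤ Qhat seq ω)).card
      ≤ Fintype.card (((Fin k → Fin A) × Fin n) → (Fin T → Fin A)) :=
  gorp_per_iteration_failure_bound_general A T k n hA hT hk f R hRnn i hiT si Qk hQk Vstar hV gap
    hgap hn Qhat hQhat
end
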